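/- Let H be a real inner product space, let n ≥ 1, and let b_1 > b_2 > ⋯ > b_n > 0 be real numbers. Then for any vectors w⁰, w¹, …, wⁿ ∈ H, Σ_{k=1}^{n} b_{n−k+1} ⟨w^k − w^{k−1}, w^n⟩ ≥ (1/2) Σ_{k=1}^{n} b_{n−k+1} ( ‖w^k‖² − ‖w^{k−1}‖² ). -/
import Mathlib


open RealInnerProductSpace

lemma abel_aux (c e : ℕ → ℝ) (hc1 : 0 ≤ c 1) (he : ∀ k, 0 ≤ e k) :
    ∀ n, 1 ≤ n → (∀ k, 1 ≤ k → k < n → c k ≤ c (k + 1)) →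
      0 ≤ (∑ k ∈ Finset.Icc 1 n, c k * (e (k - 1) - e k)) + c n * e n := by
  intro n hn
  induction n, hn using Nat.le_induction with
  | base =>
    intro _
    simp only [Finset.Icc_self, Finset.sum_singleton]
    have := he 0
    nlinarith [he 0, he 1]
  | succ n hn ih =>
    intro hmono
    have h1 : Finset.Icc 1 (n + 1) = insert (n + 1) (Finset.Icc 1 n) := by
      ext x; simp [Finset.mem_Icc]; omega
    rw [h1, Finset.sum_insert (by simp)]
    have ihn := ih (fun k hk1 hk2 => hmono k hk1 (by omega))
    have hcc : c n ≤ c (n + 1) := hmono n hn (by omega)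
    have hen := he n
    have : (n + 1 - 1) = n := by omega
    rw [this]
    nlinarith [he (n+1)]

theorem stmt8 {H : Type*} [NormedAddCommGroup H] [InnerProductSpace ℝ H]
    (n : ℕ) (hn : 1 ≤ n) (b : ℕ → ℝ)
    (hdec : ∀ k : ℕ, 1 ≤ k → k < n → b (k + 1) < b k)
    (hpos : 0 < b n) (w : ℕ → H) :
    (1 / 2) * ∑ k ∈ Finset.Icc 1 n, b (n - k + 1) * (‖w k‖ ^ 2 - ‖w (k - 1)‖ ^ 2)
      ≤ ∑ k ∈ Finset.Icc 1 n, b (n - k + 1) * ⟪w k - w (k - 1), w n⟫ := by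
  set c : ℕ → ℝ := fun k => b (n - k + 1) with hc
  set e : ℕ → ℝ := fun k => ‖w n - w k‖ ^ 2 / 2 with he
  have key : ∀ k ∈ Finset.Icc 1 n,
      c k * ⟪w k - w (k - 1), w n⟫ - (1 / 2) * (c k * (‖w k‖ ^ 2 - ‖w (k - 1)‖ ^ 2))
        = c k * (e (k - 1) - e k) := by
    intro k _
    have h1 : ‖w n - w k‖ ^ 2 = ‖w n‖ ^ 2 - 2 * ⟪w n, w k⟫ + ‖w k‖ ^ 2 := by
      rw [norm_sub_sq_real]
    have h2 : ‖w n - w (k - 1)‖ ^ 2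
        = ‖w n‖ ^ 2 - 2 * ⟪w n, w (k - 1)⟫ + ‖w (k - 1)‖ ^ 2 := by
      rw [norm_sub_sq_real]
    have h3 : ⟪w k - w (k - 1), w n⟫ = ⟪w n, w k⟫ - ⟪w n, w (k - 1)⟫ := by
      rw [inner_sub_left, real_inner_comm (w k), real_inner_comm (w (k - 1))]
    simp only [he]
    rw [h3, h1, h2]; ring
  have hmain : 0 ≤ ∑ k ∈ Finset.Icc 1 n,
      (c k * ⟪w k - w (k - 1), w n⟫ - (1 / 2) * (c k * (‖w k‖ ^ 2 - ‖w (k - 1)‖ ^ 2))) := by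
    rw [Finset.sum_congr rfl key]
    have hen : e n = 0 := by simp [he]
    have h := abel_aux c e (by
        have : n - 1 + 1 = n := by omega
        simp only [hc, this]; exact le_of_lt hpos)
      (fun k => by positivity) n hn
      (fun k hk1 hk2 => by
        have h1 : 1 ≤ n - k := by omega
        have h2 : n - k < n := by omega
        have := hdec (n - k) h1 h2
        have e1 : n - (k + 1) + 1 = n - k := by omega
        simp only [hc, e1]
        linarith)
    rw [hen] at h
    linarith
  rw [Finset.mul_sum]
  rw [Finset.sum_sub_distrib] at hmain
  linarith
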